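/- arXiv:1809.03900 — 6 statements merged into one kernel-verified Lean document; each statement's English description precedes it below -/
import Mathlib

section
/- The functions V_1(x) = 10/63 - 2x/21 - x^2/3, V_2(x) = 5/63 + 2x/7 - x^2/3, V_3(x) = 10x/21 - x^2/3, V_4(x) = -5/63 + 4x/7 - x^2/3 satisfy the recursive relations V_1(x) + m = V_3(τ_2(x)) + A(τ_2(x)), V_2(x) + m = V_1(τ_1(x)) + A(τ_1(x)), V_3(x) + m = V_2(τ_1(x)) + A(τ_1(x)), V_4(x) + m = V_3(τ_1(x)) + A(τ_1(x)) for all x in [0,1], where m = -2/63. -/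
theorem subaction_pieces_recursive_relations
    (A : ℝ → ℝ) (hA : ∀ x, A x = -(x - 1/3)^2)
    (τ₁ τ₂ : ℝ → ℝ) (hτ₁ : ∀ x, τ₁ x = x/2) (hτ₂ : ∀ x, τ₂ x = (x+1)/2)
    (V₁ V₂ V₃ V₄ : ℝ → ℝ)
    (hV₁ : ∀ x, V₁ x = 10/63 - 2*x/21 - x^2/3)
    (hV₂ : ∀ x, V₂ x = 5/63 + 2*x/7 - x^2/3)
    (hV₃ : ∀ x, V₃ x = 10*x/21 - x^2/3)
    (hV₄ : ∀ x, V₄ x = -5/63 + 4*x/7 - x^2/3)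
    (m : ℝ) (hm : m = -2/63) :
    ∀ x ∈ Set.Icc (0:ℝ) 1,
      V₁ x + m = V₃ (τ₂ x) + A (τ₂ x) ∧
      V₂ x + m = V₁ (τ₁ x) + A (τ₁ x) ∧
      V₃ x + m = V₂ (τ₁ x) + A (τ₁ x) ∧
      V₄ x + m = V₃ (τ₁ x) + A (τ₁ x) := by
  intro x _
  simp only [hA, hτ₁, hτ₂, hV₁, hV₂, hV₃, hV₄, hm]
  refine ⟨by ring, by ring, by ring, by ring⟩
end

section
/- The function V(x) = max{V_1(x), V_2(x), V_3(x), V_4(x)}, where V_1(x) = 10/63 - 2x/21 - x^2/3, V_2(x) = 5/63 + 2x/7 - x^2/3, V_3(x) = 10x/21 - x^2/3, V_4(x) = -5/63 + 4x/7 - x^2/3, satisfies the calibrated subaction equation V(x) = max{ A(τ_1(x)) + V(τ_1(x)) + 2/63, A(τ_2(x)) + V(τ_2(x)) + 2/63 } for all x in [0,1], where A(x) = -(x-1/3)^2. -/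
set_option maxHeartbeats 2000000


private lemma le4_1 (p q r s : ℝ) : p ≤ max (max p q) (max r s) := (le_max_left p q).trans (le_max_left _ _)
private lemma le4_2 (p q r s : ℝ) : q ≤ max (max p q) (max r s) := (le_max_right p q).trans (le_max_left _ _)
private lemma le4_3 (p q r s : ℝ) : r ≤ max (max p q) (max r s) := (le_max_left r s).trans (le_max_right _ _)
private lemma le4_4 (p q r s : ℝ) : s ≤ max (max p q) (max r s) := (le_max_right r s).trans (le_max_right _ _)


private lemma key (x : ℝ) (h0 : (0:ℝ) ≤ x) (h1 : x ≤ 1) :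
    (max (max (10/63 - 2*x/21 - x^2/3) (5/63 + 2*x/7 - x^2/3)) (max (10*x/21 - x^2/3) (-5/63 + 4*x/7 - x^2/3)))
    = max (-(x/2 - 1/3)^2 + (max (max (10/63 - 2*(x/2)/21 - (x/2)^2/3) (5/63 + 2*(x/2)/7 - (x/2)^2/3)) (max (10*(x/2)/21 - (x/2)^2/3) (-5/63 + 4*(x/2)/7 - (x/2)^2/3))) + 2/63) (-((x+1)/2 - 1/3)^2 + (max (max (10/63 - 2*((x+1)/2)/21 - ((x+1)/2)^2/3) (5/63 + 2*((x+1)/2)/7 - ((x+1)/2)^2/3)) (max (10*((x+1)/2)/21 - ((x+1)/2)^2/3) (-5/63 + 4*((x+1)/2)/7 - ((x+1)/2)^2/3))) + 2/63) := by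
  apply le_antisymm
  · apply max_le (max_le ?_ ?_) (max_le ?_ ?_)
    · -- L1 via branch 2, slot 3
      refine le_trans ?_ (le_max_right _ _)
      linarith [le4_3 (10/63 - 2*((x+1)/2)/21 - ((x+1)/2)^2/3) (5/63 + 2*((x+1)/2)/7 - ((x+1)/2)^2/3) (10*((x+1)/2)/21 - ((x+1)/2)^2/3) (-5/63 + 4*((x+1)/2)/7 - ((x+1)/2)^2/3)]
    · -- L2 via branch 1, slot 1
      refine le_trans ?_ (le_max_left _ _)
      linarith [le4_1 (10/63 - 2*(x/2)/21 - (x/2)^2/3) (5/63 + 2*(x/2)/7 - (x/2)^2/3) (10*(x/2)/21 - (x/2)^2/3) (-5/63 + 4*(x/2)/7 - (x/2)^2/3)]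
    · -- L3 via branch 1, slot 2
      refine le_trans ?_ (le_max_left _ _)
      linarith [le4_2 (10/63 - 2*(x/2)/21 - (x/2)^2/3) (5/63 + 2*(x/2)/7 - (x/2)^2/3) (10*(x/2)/21 - (x/2)^2/3) (-5/63 + 4*(x/2)/7 - (x/2)^2/3)]
    · -- L4 via branch 1, slot 3
      refine le_trans ?_ (le_max_left _ _)
      linarith [le4_3 (10/63 - 2*(x/2)/21 - (x/2)^2/3) (5/63 + 2*(x/2)/7 - (x/2)^2/3) (10*(x/2)/21 - (x/2)^2/3) (-5/63 + 4*(x/2)/7 - (x/2)^2/3)]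
  · have hE1 := le4_1 (10/63 - 2*x/21 - x^2/3) (5/63 + 2*x/7 - x^2/3) (10*x/21 - x^2/3) (-5/63 + 4*x/7 - x^2/3)
    have hE2 := le4_2 (10/63 - 2*x/21 - x^2/3) (5/63 + 2*x/7 - x^2/3) (10*x/21 - x^2/3) (-5/63 + 4*x/7 - x^2/3)
    have hE3 := le4_3 (10/63 - 2*x/21 - x^2/3) (5/63 + 2*x/7 - x^2/3) (10*x/21 - x^2/3) (-5/63 + 4*x/7 - x^2/3)
    have hE4 := le4_4 (10/63 - 2*x/21 - x^2/3) (5/63 + 2*x/7 - x^2/3) (10*x/21 - x^2/3) (-5/63 + 4*x/7 - x^2/3)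
    apply max_le ?_ ?_
    · have hm : (max (max (10/63 - 2*(x/2)/21 - (x/2)^2/3) (5/63 + 2*(x/2)/7 - (x/2)^2/3)) (max (10*(x/2)/21 - (x/2)^2/3) (-5/63 + 4*(x/2)/7 - (x/2)^2/3))) ≤ (max (max (10/63 - 2*x/21 - x^2/3) (5/63 + 2*x/7 - x^2/3)) (max (10*x/21 - x^2/3) (-5/63 + 4*x/7 - x^2/3))) + (x/2 - 1/3)^2 - 2/63 := by
        apply max_le (max_le ?_ ?_) (max_le ?_ ?_)
        · linarith [hE2]
        · linarith [hE3]
        · linarith [hE4]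
        · linarith [hE4, h1]
      linarith [hm]
    · have hm : (max (max (10/63 - 2*((x+1)/2)/21 - ((x+1)/2)^2/3) (5/63 + 2*((x+1)/2)/7 - ((x+1)/2)^2/3)) (max (10*((x+1)/2)/21 - ((x+1)/2)^2/3) (-5/63 + 4*((x+1)/2)/7 - ((x+1)/2)^2/3))) ≤ (max (max (10/63 - 2*x/21 - x^2/3) (5/63 + 2*x/7 - x^2/3)) (max (10*x/21 - x^2/3) (-5/63 + 4*x/7 - x^2/3))) + ((x+1)/2 - 1/3)^2 - 2/63 := by
        apply max_le (max_le ?_ ?_) (max_le ?_ ?_)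
        · linarith [hE1, h0]
        · linarith [hE1, h0]
        · linarith [hE1]
        · rcases le_total x (1/2) with h | h
          · linarith [hE1]
          · linarith [hE3]
      linarith [hm]


theorem calibrated_subaction_equation_quadratic
    (A : ℝ → ℝ) (hA : ∀ x, A x = -(x - 1/3)^2)
    (τ₁ τ₂ : ℝ → ℝ) (hτ₁ : ∀ x, τ₁ x = x/2) (hτ₂ : ∀ x, τ₂ x = (x+1)/2)
    (V : ℝ → ℝ)
    (hV : ∀ x, V x = max (max (10/63 - 2*x/21 - x^2/3) (5/63 + 2*x/7 - x^2/3))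
                        (max (10*x/21 - x^2/3) (-5/63 + 4*x/7 - x^2/3))) :
    ∀ x ∈ Set.Icc (0:ℝ) 1,
      V x = max (A (τ₁ x) + V (τ₁ x) + 2/63) (A (τ₂ x) + V (τ₂ x) + 2/63) := by
  intro x hx
  simp only [hτ₁, hτ₂, hA, hV]
  exact key x hx.1 hx.2
end

section
/- The function V_2(x) = Σ_{i=0}^∞ [ sin^2(π(2/3 + (-1/2)^i (x - 2/3))) - sin^2(2π/3) ] is well-defined (the series converges absolutely and uniformly on [0,1]) and satisfies V_2(2/3) = 0 and the functional equation V_2(x) - V_2(1 - x/2) = sin^2(πx) - sin^2(2π/3) for all x ∈ [0,1]. -/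
open Real

lemma sin_sq_lip (a b : ℝ) : |Real.sin a ^ 2 - Real.sin b ^ 2| ≤ 2 * |a - b| := by
  have h : Real.sin a ^ 2 - Real.sin b ^ 2
      = (Real.sin a - Real.sin b) * (Real.sin a + Real.sin b) := by ring
  rw [h, abs_mul]
  have h1 : |Real.sin a - Real.sin b| ≤ |a - b| := by
    rw [Real.sin_sub_sin, abs_mul, abs_mul]
    have h2 : |2 * Real.sin ((a - b) / 2)| ≤ |a - b| := by
      rw [abs_mul]
      have := Real.abs_sin_le_abs (x := (a - b) / 2)
      rw [abs_div, show |(2:ℝ)| = 2 by norm_num] at this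
      rw [show |(2:ℝ)| = 2 by norm_num]
      nlinarith [abs_nonneg (a-b), abs_nonneg (Real.sin ((a-b)/2))]
    have h3 : |Real.cos ((a + b) / 2)| ≤ 1 :=
      abs_le.mpr ⟨Real.neg_one_le_cos _, Real.cos_le_one _⟩
    calc |2| * |Real.sin ((a - b) / 2)| * |Real.cos ((a + b) / 2)|
        ≤ |a - b| * 1 := by
          rw [← abs_mul]
          exact mul_le_mul h2 h3 (abs_nonneg _) (abs_nonneg _)
      _ = |a - b| := mul_one _
  have h2 : |Real.sin a + Real.sin b| ≤ 2 := by
    calc |Real.sin a + Real.sin b| ≤ |Real.sin a| + |Real.sin b| := abs_add_le _ _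
    _ ≤ 1 + 1 := by
        gcongr <;> exact abs_le.mpr ⟨Real.neg_one_le_sin _, Real.sin_le_one _⟩
    _ = 2 := by norm_num
  calc |Real.sin a - Real.sin b| * |Real.sin a + Real.sin b|
      ≤ |a - b| * 2 := by
        exact mul_le_mul h1 h2 (abs_nonneg _) (abs_nonneg _)
    _ = 2 * |a - b| := by ring

lemma term_bound (x : ℝ) (hx : x ∈ Set.Icc (0:ℝ) 1) (i : ℕ) :
    |Real.sin (Real.pi * (2/3 + (-1/2 : ℝ)^i * (x - 2/3))) ^ 2
      - Real.sin (2 * Real.pi / 3) ^ 2| ≤ 2 * Real.pi * (1/2 : ℝ)^i := by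
  have h23 : (2 * Real.pi / 3) = Real.pi * (2/3 + (-1/2 : ℝ)^i * 0) := by ring
  rw [h23]
  refine le_trans (sin_sq_lip _ _) ?_
  have hd : Real.pi * (2/3 + (-1/2 : ℝ)^i * (x - 2/3))
      - Real.pi * (2/3 + (-1/2 : ℝ)^i * 0) = Real.pi * (-1/2 : ℝ)^i * (x - 2/3) := by
    ring
  rw [hd, abs_mul, abs_mul, abs_pow]
  have hπ : |Real.pi| = Real.pi := abs_of_pos Real.pi_pos
  have hhalf : |(-1/2 : ℝ)| = 1/2 := by norm_num
  rw [hπ, hhalf]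
  have hx' : |x - 2/3| ≤ 1 := by
    rw [abs_le]; constructor <;> nlinarith [hx.1, hx.2]
  have hpow : (0:ℝ) ≤ (1/2:ℝ)^i := by positivity
  nlinarith [Real.pi_pos, mul_le_mul_of_nonneg_left hx'
    (by positivity : (0:ℝ) ≤ Real.pi * (1/2:ℝ)^i)]

lemma bound_summable : Summable (fun i : ℕ => 2 * Real.pi * (1/2 : ℝ)^i) :=
  (summable_geometric_of_lt_one (by norm_num) (by norm_num)).mul_left _

theorem V2_series_properties
    (V₂ : ℝ → ℝ)
    (hV₂ : ∀ x, V₂ x = ∑' i : ℕ,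
      (Real.sin (Real.pi * (2/3 + (-1/2 : ℝ)^i * (x - 2/3))) ^ 2
        - Real.sin (2 * Real.pi / 3) ^ 2)) :
    (∀ x ∈ Set.Icc (0:ℝ) 1, Summable (fun i : ℕ =>
        |Real.sin (Real.pi * (2/3 + (-1/2 : ℝ)^i * (x - 2/3))) ^ 2
          - Real.sin (2 * Real.pi / 3) ^ 2|)) ∧
    TendstoUniformlyOn
      (fun n : ℕ => fun x => ∑ i ∈ Finset.range n,
        (Real.sin (Real.pi * (2/3 + (-1/2 : ℝ)^i * (x - 2/3))) ^ 2
          - Real.sin (2 * Real.pi / 3) ^ 2))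
      V₂ Filter.atTop (Set.Icc 0 1) ∧
    V₂ (2/3) = 0 ∧
    ∀ x ∈ Set.Icc (0:ℝ) 1,
      V₂ x - V₂ (1 - x/2)
        = Real.sin (Real.pi * x) ^ 2 - Real.sin (2 * Real.pi / 3) ^ 2 := by
  have hsum_abs : ∀ x ∈ Set.Icc (0:ℝ) 1, Summable (fun i : ℕ =>
      |Real.sin (Real.pi * (2/3 + (-1/2 : ℝ)^i * (x - 2/3))) ^ 2
        - Real.sin (2 * Real.pi / 3) ^ 2|) := by
    intro x hx
    exact bound_summable.of_nonneg_of_le (fun i => abs_nonneg _) (term_bound x hx)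
  have hsum : ∀ x ∈ Set.Icc (0:ℝ) 1, Summable (fun i : ℕ =>
      Real.sin (Real.pi * (2/3 + (-1/2 : ℝ)^i * (x - 2/3))) ^ 2
        - Real.sin (2 * Real.pi / 3) ^ 2) := by
    intro x hx
    exact (hsum_abs x hx).of_abs
  refine ⟨hsum_abs, ?_, ?_, ?_⟩
  · have hVeq : Set.EqOn V₂
        (fun x => ∑' i : ℕ, (Real.sin (Real.pi * (2/3 + (-1/2 : ℝ)^i * (x - 2/3))) ^ 2
          - Real.sin (2 * Real.pi / 3) ^ 2)) (Set.Icc 0 1) := fun x _ => hV₂ x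
    refine (tendstoUniformlyOn_tsum_nat bound_summable ?_).congr_right (fun x hx => (hVeq hx).symm)
    intro i x hx
    simpa [Real.norm_eq_abs] using term_bound x hx i
  · rw [hV₂]
    simp
  · intro x hx
    have hx2 : (1 - x/2) ∈ Set.Icc (0:ℝ) 1 := by
      constructor <;> [nlinarith [hx.1, hx.2]; nlinarith [hx.1, hx.2]]
    rw [hV₂ x, hV₂ (1 - x/2)]
    set f : ℕ → ℝ := fun i =>
      Real.sin (Real.pi * (2/3 + (-1/2 : ℝ)^i * (x - 2/3))) ^ 2
        - Real.sin (2 * Real.pi / 3) ^ 2 with hf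
    have hshift : (fun i : ℕ =>
        Real.sin (Real.pi * (2/3 + (-1/2 : ℝ)^i * ((1 - x/2) - 2/3))) ^ 2
          - Real.sin (2 * Real.pi / 3) ^ 2) = fun i => f (i + 1) := by
      funext i
      simp only [hf, pow_succ]
      ring_nf
    rw [hshift]
    have hsf : Summable f := hsum x hx
    have h0 : ∑' i, f i = f 0 + ∑' i, f (i + 1) := Summable.tsum_eq_zero_add hsf
    rw [h0]
    have hf0 : f 0 = Real.sin (Real.pi * x) ^ 2 - Real.sin (2 * Real.pi / 3) ^ 2 := by
      simp only [hf, pow_zero, one_mul]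
      ring_nf
    rw [← hf0]; ring
end

section
/- For all real x with |x| < 1, Σ_{i=0}^∞ sin(2π(-1/2)^i x) = Σ_{k=0}^∞ (-1)^k (2πx)^{2k+1}/(2k+1)! · 2^{2k+1}/(2^{2k+1} + 1). -/
/-!
Expanding each `sin (r ^ i * t)` in its Taylor series gives a double series in `(i, k)` whose
`(i, k)` term is bounded by `|r| ^ i * |t| ^ (2k+1) / (2k+1)!`, so it is absolutely summable.
Summing over `i` first, the `k`-th column is the geometric series `∑ (r ^ (2k+1)) ^ i`, equal to
`(1 - r ^ (2k+1))⁻¹`; for `r = -1/2` this is `2 ^ (2k+1) / (2 ^ (2k+1) + 1)`.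
-/

open Nat

namespace Real

lemma summable_abs_pow_odd_div_factorial (t : ℝ) :
    Summable fun k : ℕ => |t| ^ (2 * k + 1) / (2 * k + 1)! :=
  (summable_pow_div_factorial |t|).comp_injective fun a b h => by simpa using h

lemma abs_sin_term_geometric_le {r : ℝ} (hr : |r| ≤ 1) (t : ℝ) (i k : ℕ) :
    |(-1) ^ k * (r ^ i * t) ^ (2 * k + 1) / (2 * k + 1)!|
      ≤ |r| ^ i * (|t| ^ (2 * k + 1) / (2 * k + 1)!) := by
  have hpow : (|r| ^ i) ^ (2 * k + 1) ≤ |r| ^ i :=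
    pow_le_of_le_one (by positivity) (pow_le_one₀ (abs_nonneg r) hr) (by omega)
  rw [abs_div, abs_mul, abs_pow, abs_pow, abs_neg, abs_one, one_pow, one_mul, abs_mul, abs_pow,
    Nat.abs_cast, mul_pow, mul_div_assoc]
  gcongr

lemma summable_sin_term_geometric {r : ℝ} (hr : |r| < 1) (t : ℝ) :
    Summable (Function.uncurry fun i k : ℕ =>
      (-1) ^ k * (r ^ i * t) ^ (2 * k + 1) / (2 * k + 1)!) :=
  .of_norm_bounded
    ((summable_geometric_of_lt_one (abs_nonneg r) hr).mul_of_nonneg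
      (summable_abs_pow_odd_div_factorial t) (fun _ => by positivity) (fun _ => by positivity))
    fun p => abs_sin_term_geometric_le hr.le t p.1 p.2

theorem tsum_sin_geometric_mul {r : ℝ} (hr : |r| < 1) (t : ℝ) :
    ∑' i : ℕ, sin (r ^ i * t)
      = ∑' k : ℕ, (-1) ^ k * t ^ (2 * k + 1) / (2 * k + 1)! * (1 - r ^ (2 * k + 1))⁻¹ := by
  have hcolumn (k : ℕ) : ∑' i : ℕ, (-1) ^ k * (r ^ i * t) ^ (2 * k + 1) / (2 * k + 1)!
      = (-1) ^ k * t ^ (2 * k + 1) / (2 * k + 1)! * (1 - r ^ (2 * k + 1))⁻¹ := by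
    have hr' : ‖r ^ (2 * k + 1)‖ < 1 := by
      rw [norm_pow, norm_eq_abs]
      exact pow_lt_one₀ (abs_nonneg r) hr (by omega)
    rw [← tsum_geometric_of_norm_lt_one hr', ← tsum_mul_left]
    congr 1 with i
    ring
  calc ∑' i : ℕ, sin (r ^ i * t)
      = ∑' i : ℕ, ∑' k : ℕ, (-1) ^ k * (r ^ i * t) ^ (2 * k + 1) / (2 * k + 1)! :=
        tsum_congr fun i => (hasSum_sin _).tsum_eq.symm
    _ = ∑' k : ℕ, ∑' i : ℕ, (-1) ^ k * (r ^ i * t) ^ (2 * k + 1) / (2 * k + 1)! :=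
        (summable_sin_term_geometric hr t).tsum_comm.symm
    _ = _ := tsum_congr hcolumn

end Real

lemma inv_one_sub_neg_half_pow_odd (k : ℕ) :
    (1 - (-1 / 2 : ℝ) ^ (2 * k + 1))⁻¹ = 2 ^ (2 * k + 1) / (2 ^ (2 * k + 1) + 1) := by
  have h : 1 - (-1 / 2 : ℝ) ^ (2 * k + 1) = (2 ^ (2 * k + 1) + 1) / 2 ^ (2 * k + 1) := by
    rw [div_pow, (odd_two_mul_add_one k).neg_pow, one_pow]
    field_simp
    ring
  rw [h, inv_div]

theorem sin_series_rearrangement :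
    ∀ x : ℝ, |x| < 1 →
      (∑' i : ℕ, Real.sin (2 * Real.pi * (-1/2 : ℝ)^i * x))
        = ∑' k : ℕ,
            (-1 : ℝ)^k * (2 * Real.pi * x)^(2*k+1) / (Nat.factorial (2*k+1))
              * (2^(2*k+1) / (2^(2*k+1) + 1)) := by
  intro x _
  have hr : |(-1 / 2 : ℝ)| < 1 := by norm_num [abs_div]
  calc ∑' i : ℕ, Real.sin (2 * Real.pi * (-1 / 2 : ℝ) ^ i * x)
      = ∑' i : ℕ, Real.sin ((-1 / 2 : ℝ) ^ i * (2 * Real.pi * x)) := by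
        congr 1 with i
        ring_nf
    _ = _ := by
        rw [Real.tsum_sin_geometric_mul hr]
        simp only [inv_one_sub_neg_half_pow_odd]
end

section
/- Suppose G: C([0,1],ℝ) -> C([0,1],ℝ) is defined by G(g) = (1/2)g + (1/2)·log(L_A(e^g)), where L_A(f)(x) = e^{A(τ_1(x))} f(τ_1(x)) + e^{A(τ_2(x))} f(τ_2(x)) for a continuous potential A and τ_1(x) = x/2, τ_2(x) = (x+1)/2. Then G is nonexpansive in the sup norm: for all continuous f, g: [0,1] -> ℝ, ‖G(f) - G(g)‖_∞ ≤ ‖f - g‖_∞. -/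
theorem half_iteration_ruelle_nonexpansive
    (A : ℝ → ℝ) (hA : ContinuousOn A (Set.Icc 0 1))
    (τ₁ τ₂ : ℝ → ℝ) (hτ₁ : ∀ x, τ₁ x = x/2) (hτ₂ : ∀ x, τ₂ x = (x+1)/2)
    (L : (ℝ → ℝ) → (ℝ → ℝ))
    (hL : ∀ f x, L f x = Real.exp (A (τ₁ x)) * f (τ₁ x)
                        + Real.exp (A (τ₂ x)) * f (τ₂ x))
    (G : (ℝ → ℝ) → (ℝ → ℝ))
    (hG : ∀ g x, G g x = (1/2) * g x + (1/2) * Real.log (L (fun y => Real.exp (g y)) x))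
    (f g : ℝ → ℝ) (hf : ContinuousOn f (Set.Icc 0 1)) (hg : ContinuousOn g (Set.Icc 0 1))
    (c : ℝ) (hc : ∀ x ∈ Set.Icc (0:ℝ) 1, |f x - g x| ≤ c) :
    ∀ x ∈ Set.Icc (0:ℝ) 1, |G f x - G g x| ≤ c := by
  intro x hx
  obtain ⟨hx0, hx1⟩ := hx
  have h1 : τ₁ x ∈ Set.Icc (0:ℝ) 1 := by rw [hτ₁]; constructor <;> [linarith; linarith]
  have h2 : τ₂ x ∈ Set.Icc (0:ℝ) 1 := by rw [hτ₂]; constructor <;> [linarith; linarith]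
  have hc0 : 0 ≤ c := le_trans (abs_nonneg _) (hc x ⟨hx0, hx1⟩)
  have ha : L (fun y => Real.exp (f y)) x
      = Real.exp (A (τ₁ x)) * Real.exp (f (τ₁ x)) + Real.exp (A (τ₂ x)) * Real.exp (f (τ₂ x)) :=
    hL _ x
  have hb : L (fun y => Real.exp (g y)) x
      = Real.exp (A (τ₁ x)) * Real.exp (g (τ₁ x)) + Real.exp (A (τ₂ x)) * Real.exp (g (τ₂ x)) :=
    hL _ x
  set a := L (fun y => Real.exp (f y)) x with ha'
  set b := L (fun y => Real.exp (g y)) x with hb'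
  have hapos : 0 < a := by rw [ha]; positivity
  have hbpos : 0 < b := by rw [hb]; positivity
  have key : ∀ t ∈ Set.Icc (0:ℝ) 1, Real.exp (f t) ≤ Real.exp c * Real.exp (g t) ∧
      Real.exp (g t) ≤ Real.exp c * Real.exp (f t) := by
    intro t ht
    have := abs_le.mp (hc t ht)
    constructor <;> rw [← Real.exp_add] <;> exact Real.exp_le_exp.mpr (by linarith [this.1, this.2])
  obtain ⟨k11, k12⟩ := key _ h1
  obtain ⟨k21, k22⟩ := key _ h2
  have e1 : (0:ℝ) < Real.exp (A (τ₁ x)) := Real.exp_pos _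
  have e2 : (0:ℝ) < Real.exp (A (τ₂ x)) := Real.exp_pos _
  have hab : a ≤ Real.exp c * b := by rw [ha, hb]; nlinarith
  have hba : b ≤ Real.exp c * a := by rw [ha, hb]; nlinarith
  have hlog : |Real.log a - Real.log b| ≤ c := by
    rw [abs_le]
    constructor
    · have h := Real.log_le_log hbpos hba
      rw [Real.log_mul (Real.exp_ne_zero c) (ne_of_gt hapos), Real.log_exp] at h
      linarith
    · have h := Real.log_le_log hapos hab
      rw [Real.log_mul (Real.exp_ne_zero c) (ne_of_gt hbpos), Real.log_exp] at h
      linarith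
  have hfg := abs_le.mp (hc x ⟨hx0, hx1⟩)
  have hlog' := abs_le.mp hlog
  rw [hG, hG, abs_le]
  constructor <;> [nlinarith [hfg.1, hlog'.1]; nlinarith [hfg.2, hlog'.2]]
end

section
/- Let α > 0, β ∈ ℝ, g_1(x) = α(x - 1/3) + β, g_2(x) = α(1/3 - x) + β, f(x) = g_1(x) for x < 1/3 and g_2(x) for 1/3 ≤ x ≤ 1/2, and u(x) = f(x) for x < 1/2, u(x) = f(1-x) for x ≥ 1/2. Then u satisfies max{2u(x/2), 2u((x+1)/2)} = u(x) + β for all x ∈ [0,1], i.e., u is a potential equal to its own calibrated subaction with m(u) = β. -/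
theorem potential_equal_to_its_subaction
    (α β : ℝ) (hα : 0 < α)
    (g₁ g₂ f u : ℝ → ℝ)
    (hg₁ : ∀ x, g₁ x = α * (x - 1/3) + β)
    (hg₂ : ∀ x, g₂ x = α * (1/3 - x) + β)
    (hf : ∀ x, f x = if x < 1/3 then g₁ x else g₂ x)
    (hu : ∀ x, u x = if x < 1/2 then f x else f (1 - x)) :
    ∀ x ∈ Set.Icc (0:ℝ) 1,
      max (2 * u (x/2)) (2 * u ((x+1)/2)) = u x + β := by
  intro x hx
  obtain ⟨hx0, hx1⟩ := hx
  have key : ∀ a b c : ℝ, a ≤ b → 2 * b = c + β → max (2 * a) (2 * b) = c + β := by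
    intro a b c hab h2; rw [max_eq_right (by linarith)]; exact h2
  have key' : ∀ a b c : ℝ, b ≤ a → 2 * a = c + β → max (2 * a) (2 * b) = c + β := by
    intro a b c hab h2; rw [max_eq_left (by linarith)]; exact h2
  rcases le_or_gt x (1/3) with h1 | h1
  · -- C1 : 0 ≤ x ≤ 1/3
    have hA : u (x/2) = α * (x/2 - 1/3) + β := by
      rw [hu, if_pos (by linarith), hf, if_pos (by linarith), hg₁]
    have hB : u ((x+1)/2) = α * (1/3 - (1 - (x+1)/2)) + β := by
      rw [hu, if_neg (by push_neg; linarith), hf, if_neg (by push_neg; linarith), hg₂]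
    rcases lt_or_eq_of_le h1 with h1' | h1'
    · have hC : u x = α * (x - 1/3) + β := by
        rw [hu, if_pos (by linarith), hf, if_pos (by linarith), hg₁]
      rw [hA, hB, hC]
      exact key _ _ _ (by nlinarith) (by ring)
    · have hC : u x = α * (1/3 - x) + β := by
        rw [hu, if_pos (by linarith), hf, if_neg (by push_neg; linarith), hg₂]
      rw [hA, hB, hC]
      exact key _ _ _ (by nlinarith) (by nlinarith [h1'])
  · rcases lt_or_ge x (1/2) with h2 | h2
    · -- C2 : 1/3 < x < 1/2
      have hA : u (x/2) = α * (x/2 - 1/3) + β := by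
        rw [hu, if_pos (by linarith), hf, if_pos (by linarith), hg₁]
      have hB : u ((x+1)/2) = α * ((1 - (x+1)/2) - 1/3) + β := by
        rw [hu, if_neg (by push_neg; linarith), hf, if_pos (by linarith), hg₁]
      have hC : u x = α * (1/3 - x) + β := by
        rw [hu, if_pos (by linarith), hf, if_neg (by push_neg; linarith), hg₂]
      rw [hA, hB, hC]
      exact key _ _ _ (by nlinarith [mul_pos hα (by linarith : (0:ℝ) < 1/2 - x)]) (by ring)
    · rcases lt_or_ge x (2/3) with h3 | h3
      · -- C3 : 1/2 ≤ x < 2/3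
        have hA : u (x/2) = α * (x/2 - 1/3) + β := by
          rw [hu, if_pos (by linarith), hf, if_pos (by linarith), hg₁]
        have hB : u ((x+1)/2) = α * ((1 - (x+1)/2) - 1/3) + β := by
          rw [hu, if_neg (by push_neg; linarith), hf, if_pos (by linarith), hg₁]
        have hC : u x = α * (1/3 - (1 - x)) + β := by
          rw [hu, if_neg (by push_neg; linarith), hf, if_neg (by push_neg; linarith), hg₂]
        rw [hA, hB, hC]
        exact key' _ _ _ (by nlinarith [mul_nonneg hα.le (by linarith : (0:ℝ) ≤ x - 1/2)]) (by ring)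
      · rcases eq_or_lt_of_le h3 with h3' | h3'
        · -- C4 : x = 2/3
          subst h3'
          have hA : u ((2/3 : ℝ)/2) = α * (1/3 - (2/3 : ℝ)/2) + β := by
            rw [hu, if_pos (by norm_num), hf, if_neg (by norm_num), hg₂]
          have hB : u (((2/3 : ℝ)+1)/2) = α * ((1 - ((2/3 : ℝ)+1)/2) - 1/3) + β := by
            rw [hu, if_neg (by norm_num), hf, if_pos (by norm_num), hg₁]
          have hC : u (2/3 : ℝ) = α * (1/3 - (1 - (2/3 : ℝ))) + β := by
            rw [hu, if_neg (by norm_num), hf, if_neg (by norm_num), hg₂]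
          rw [hA, hB, hC]
          exact key' _ _ _ (by nlinarith) (by ring)
        · rcases lt_or_eq_of_le hx1 with h4 | h4
          · -- C5 : 2/3 < x < 1
            have hA : u (x/2) = α * (1/3 - x/2) + β := by
              rw [hu, if_pos (by linarith), hf, if_neg (by push_neg; linarith), hg₂]
            have hB : u ((x+1)/2) = α * ((1 - (x+1)/2) - 1/3) + β := by
              rw [hu, if_neg (by push_neg; linarith), hf, if_pos (by linarith), hg₁]
            have hC : u x = α * ((1 - x) - 1/3) + β := by
              rw [hu, if_neg (by push_neg; linarith), hf, if_pos (by linarith), hg₁]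
            rw [hA, hB, hC]
            exact key' _ _ _ (by nlinarith) (by ring)
          · -- C6 : x = 1
            subst h4
            have hA : u ((1:ℝ)/2) = α * (1/3 - (1 - (1:ℝ)/2)) + β := by
              rw [hu, if_neg (by norm_num), hf, if_neg (by norm_num), hg₂]
            have hB : u (((1:ℝ)+1)/2) = α * ((1 - ((1:ℝ)+1)/2) - 1/3) + β := by
              rw [hu, if_neg (by norm_num), hf, if_pos (by norm_num), hg₁]
            have hC : u (1:ℝ) = α * ((1 - (1:ℝ)) - 1/3) + β := by
              rw [hu, if_neg (by norm_num), hf, if_pos (by norm_num), hg₁]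
            rw [hA, hB, hC]
            exact key' _ _ _ (by nlinarith) (by ring)
end
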